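/- Let v_0, ..., v_{11} ∈ ℤ^{12} be the cyclic shifts of v_0 = (2, −1, 0, 1, −1, 0, 0, 0, −1, 1, 0, −1), i.e., (v_s)_t = (v_0)_{t−s mod 12}. Then: (i) the rank of the 12×12 matrix with rows v_0, ..., v_{11} equals 6; (ii) v_k + v_{k+4} + v_{k+8} = 0 for k = 0, 1, 2, 3; (iii) v_{k+3} = v_k + v_{k+1} + v_{k+5} + v_{k+6} for k = 0, 1; and (iv) v_0, ..., v_5 are linearly independent over ℚ. -/

import Mathlib

/-!
The shift `vE6 (k + s)` is `vE6 s` translated by `k`, so a linear relation among the `vE6 s`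
holds for all translates once it holds at `k = 0`, where it is a finite check. Read as
`v_{k+6} = v_{k+3} - v_k - v_{k+1} - v_{k+5}`, relation (iii) expresses `v_6, …, v_11` in turn
through `v_0, …, v_5`; these are independent (already on the first eight coordinates), so the
row space has dimension `6`.
-/

/-- The vector `v₀ = (2, −1, 0, 1, −1, 0, 0, 0, −1, 1, 0, −1)` of singularity orders of
`ξ₁₁(z)` in type `E₆`. -/
def v0E6 : Fin 12 → ℚ := ![2, -1, 0, 1, -1, 0, 0, 0, -1, 1, 0, -1]

/-- The cyclic shifts `(v_s)_t = (v₀)_{t-s mod 12}`. -/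
def vE6 : Fin 12 → Fin 12 → ℚ := fun s t => v0E6 (t - s)

open Submodule

theorem Matrix.rank_eq_card_of_linearIndependent_of_mem_span {m n κ R : Type*}
    [Fintype m] [Fintype n] [Fintype κ] [Field R] (A : Matrix m n R) (f : κ → m)
    (hli : LinearIndependent R (fun j => A (f j)))
    (hspan : ∀ i, A i ∈ span R (Set.range fun j => A (f j))) :
    A.rank = Fintype.card κ := by
  have hrows : span R (Set.range A.row) = span R (Set.range fun j => A (f j)) :=
    span_eq_span (Set.range_subset_iff.2 hspan)
      (Set.range_subset_iff.2 fun j => subset_span ⟨f j, rfl⟩)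
  rw [A.rank_eq_finrank_span_row, hrows, finrank_span_eq_card hli]

theorem vE6_add (k s : Fin 12) : vE6 (k + s) = LinearMap.funLeft ℚ ℚ (· - k) (vE6 s) := by
  ext t
  simp only [vE6, LinearMap.funLeft_apply, sub_sub]

theorem vE6_add_vE6_add_four_add_vE6_add_eight (k : Fin 12) :
    vE6 k + vE6 (k + 4) + vE6 (k + 8) = 0 := by
  have h₀ : vE6 0 + vE6 4 + vE6 8 = 0 := by decide +kernel
  simpa only [map_add, map_zero, ← vE6_add, add_zero] using
    congrArg (LinearMap.funLeft ℚ ℚ (· - k)) h₀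

theorem vE6_add_three (k : Fin 12) :
    vE6 (k + 3) = vE6 k + vE6 (k + 1) + vE6 (k + 5) + vE6 (k + 6) := by
  have h₀ : vE6 3 = vE6 0 + vE6 1 + vE6 5 + vE6 6 := by decide +kernel
  simpa only [map_add, ← vE6_add, add_zero] using
    congrArg (LinearMap.funLeft ℚ ℚ (· - k)) h₀

theorem vE6_linearIndependent :
    LinearIndependent ℚ (fun i : Fin 6 => vE6 (Fin.castLE (by norm_num) i)) := by
  rw [Fintype.linearIndependent_iff]
  intro c hc
  have coord (t : Fin 12) := congrFun hc t
  have h0 := coord 0; have h1 := coord 1; have h2 := coord 2; have h3 := coord 3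
  have h4 := coord 4; have h5 := coord 5; have h6 := coord 6; have h7 := coord 7
  simp only [Fin.isValue, Finset.sum_apply, Pi.smul_apply, vE6, v0E6, zero_sub, smul_eq_mul,
    Fin.sum_univ_six, Fin.castLE_zero, neg_zero, Matrix.cons_val_zero, Fin.reduceCastLE,
    Matrix.cons_val, mul_neg, mul_one, mul_zero, add_zero, Pi.zero_apply, sub_zero,
    Matrix.cons_val_one, sub_self, Fin.reduceSub, zero_add] at h0 h1 h2 h3 h4 h5 h6 h7
  intro i
  fin_cases i <;> simp only [Fin.zero_eta, Fin.mk_one, Fin.reduceFinMk] <;> linarith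

theorem vE6_mem_span (s : Fin 12) :
    vE6 s ∈ span ℚ (Set.range fun i : Fin 6 => vE6 (Fin.castLE (by norm_num) i)) := by
  set S := span ℚ (Set.range fun i : Fin 6 => vE6 (Fin.castLE (by norm_num) i))
  have head (i : Fin 6) : vE6 (Fin.castLE (by norm_num) i) ∈ S := subset_span ⟨i, rfl⟩
  have step (k : Fin 12) (h : vE6 k ∈ S) (h₁ : vE6 (k + 1) ∈ S) (h₃ : vE6 (k + 3) ∈ S)
      (h₅ : vE6 (k + 5) ∈ S) : vE6 (k + 6) ∈ S := by
    have h₆ : vE6 (k + 6) = vE6 (k + 3) - (vE6 k + vE6 (k + 1) + vE6 (k + 5)) := by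
      rw [vE6_add_three]; abel
    rw [h₆]
    exact S.sub_mem h₃ (S.add_mem (S.add_mem h h₁) h₅)
  have h6 := step 0 (head 0) (head 1) (head 3) (head 5)
  have h7 := step 1 (head 1) (head 2) (head 4) h6
  have h8 := step 2 (head 2) (head 3) (head 5) h7
  have h9 := step 3 (head 3) (head 4) h6 h8
  have h10 := step 4 (head 4) (head 5) h7 h9
  have h11 := step 5 (head 5) h6 h8 h10
  fin_cases s
  exacts [head 0, head 1, head 2, head 3, head 4, head 5, h6, h7, h8, h9, h10, h11]

theorem E6_block_linear_algebra :
    (Matrix.of vE6).rank = 6 ∧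
    (∀ k : Fin 12, k.1 ≤ 3 → vE6 k + vE6 (k + 4) + vE6 (k + 8) = 0) ∧
    (∀ k : Fin 12, k.1 ≤ 1 →
      vE6 (k + 3) = vE6 k + vE6 (k + 1) + vE6 (k + 5) + vE6 (k + 6)) ∧
    LinearIndependent ℚ (fun i : Fin 6 => vE6 (Fin.castLE (by norm_num) i)) := by
  refine ⟨?_, fun k _ => vE6_add_vE6_add_four_add_vE6_add_eight k,
    fun k _ => vE6_add_three k, vE6_linearIndependent⟩
  rw [(Matrix.of vE6).rank_eq_card_of_linearIndependent_of_mem_span (Fin.castLE (by norm_num))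
    vE6_linearIndependent vE6_mem_span, Fintype.card_fin]
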